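/- arXiv:0710.4791 — 2 statements merged into one kernel-verified Lean document; each statement's English description precedes it below -/
import Mathlib

section
/- Let k₀ ∈ M₂(O_F) ∩ GL₂(F) be of the form k₀ = (z' t'; z t), where k = (x y; z t) and k' = (x' y'; z' t') are both in GL₂(O_F) and k' ∉ Bk (B the upper triangular Borel), so that the two rows of k₀ are the bottom rows of two elements of GL₂(O_F). Let T be the diagonal torus with entries in F*, with the coset T·I_n taken inside GL₂(F). Then k₀ ∈ T·I_n if and only if k₀ ∈ I_n. -/
open Matrix

noncomputable section

/-- `x ∈ F` is a unit of the ring of integers `O`. -/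
def UnitO {F : Type*} [Field F] (O : ValuationSubring F) (x : F) : Prop :=
  x ∈ O ∧ ∃ u ∈ O, x * u = 1

/-- `GL₂(O_F)` viewed as a set of matrices over `F`. -/
def Kset {F : Type*} [Field F] (O : ValuationSubring F) : Set (Matrix (Fin 2) (Fin 2) F) :=
  {g | (∀ i j, g i j ∈ O) ∧ ∃ u ∈ O, g.det * u = 1}

/-- The congruence subgroup `I_n ⊂ GL₂(O_F)`. -/
def Iset {F : Type*} [Field F] (O : ValuationSubring F) (ϖ : F) (n : ℕ) :
    Set (Matrix (Fin 2) (Fin 2) F) :=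
  {g | g ∈ Kset O ∧ ∃ r ∈ O, g 1 0 = ϖ ^ n * r}

/-- The diagonal torus `T ⊂ GL₂(F)`. -/
def Tset (F : Type*) [Field F] : Set (Matrix (Fin 2) (Fin 2) F) :=
  {g | g 0 1 = 0 ∧ g 1 0 = 0 ∧ g 0 0 ≠ 0 ∧ g 1 1 ≠ 0}

lemma unitO_iff_val {F : Type*} [Field F] (O : ValuationSubring F) (x : F) :
    UnitO O x ↔ O.valuation x = 1 := by
  constructor
  · rintro ⟨hx, u, hu, hxu⟩
    have h1 : O.valuation x * O.valuation u = 1 := by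
      rw [← Valuation.map_mul, hxu, _root_.map_one]
    have hx1 : O.valuation x ≤ 1 := (O.valuation_le_one_iff x).2 hx
    have hu1 : O.valuation u ≤ 1 := (O.valuation_le_one_iff u).2 hu
    refine le_antisymm hx1 ?_
    calc (1 : _) = O.valuation x * O.valuation u := h1.symm
    _ ≤ O.valuation x * 1 := mul_le_mul_right hu1 _
    _ = O.valuation x := mul_one _
  · intro hx
    have hx0 : x ≠ 0 := by
      intro h; rw [h, map_zero] at hx; exact zero_ne_one hx
    refine ⟨(O.valuation_le_one_iff x).1 hx.le, x⁻¹, ?_, mul_inv_cancel₀ hx0⟩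
    rw [← O.valuation_le_one_iff, map_inv₀, hx, inv_one]

/-- If a row `(x y)` of a matrix over `O` with unit determinant, then `x` or `y` is a unit. -/
lemma row_has_unit {F : Type*} [Field F] (O : ValuationSubring F) {x y z w : F}
    (hx : O.valuation x ≤ 1) (hy : O.valuation y ≤ 1)
    (hz : O.valuation z ≤ 1) (hw : O.valuation w ≤ 1)
    (hdet : O.valuation (x * w - y * z) = 1) :
    O.valuation x = 1 ∨ O.valuation y = 1 := by
  by_contra h
  push_neg at h
  have hx1 : O.valuation x < 1 := lt_of_le_of_ne hx h.1
  have hy1 : O.valuation y < 1 := lt_of_le_of_ne hy h.2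
  have h1 : O.valuation (x * w) < 1 := by
    rw [Valuation.map_mul]
    calc O.valuation x * O.valuation w ≤ O.valuation x * 1 := mul_le_mul_right hw _
    _ = O.valuation x := mul_one _
    _ < 1 := hx1
  have h2 : O.valuation (y * z) < 1 := by
    rw [Valuation.map_mul]
    calc O.valuation y * O.valuation z ≤ O.valuation y * 1 := mul_le_mul_right hz _
    _ = O.valuation y := mul_one _
    _ < 1 := hy1
  have := (Valuation.map_sub O.valuation (x * w) (y * z)).trans_lt (max_lt h1 h2)
  exact absurd hdet this.ne

/-- If `a` scales a row of units into a row of `O` containing a unit, then `a` is a unit. -/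
lemma scale_val_one {F : Type*} [Field F] (O : ValuationSubring F) {a x y : F}
    (hx : O.valuation x ≤ 1) (hy : O.valuation y ≤ 1)
    (hone : O.valuation x = 1 ∨ O.valuation y = 1)
    (hax : O.valuation (a * x) ≤ 1) (hay : O.valuation (a * y) ≤ 1)
    (hunit : O.valuation (a * x) = 1 ∨ O.valuation (a * y) = 1) :
    O.valuation a = 1 := by
  refine le_antisymm ?_ ?_
  · rcases hone with h | h
    · calc O.valuation a = O.valuation a * O.valuation x := by rw [h, mul_one]
      _ = O.valuation (a * x) := (Valuation.map_mul _ _ _).symm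
      _ ≤ 1 := hax
    · calc O.valuation a = O.valuation a * O.valuation y := by rw [h, mul_one]
      _ = O.valuation (a * y) := (Valuation.map_mul _ _ _).symm
      _ ≤ 1 := hay
  · rcases hunit with h | h
    · calc (1 : _) = O.valuation a * O.valuation x := by rw [← Valuation.map_mul, h]
      _ ≤ O.valuation a * 1 := mul_le_mul_right hx _
      _ = O.valuation a := mul_one _
    · calc (1 : _) = O.valuation a * O.valuation y := by rw [← Valuation.map_mul, h]
      _ ≤ O.valuation a * 1 := mul_le_mul_right hy _
      _ = O.valuation a := mul_one _

/-- for `k₀ ∈ M₂(O_F) ∩ GL₂(F)` whose two rows are bottom rows of elements of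
`GL₂(O_F)` (i.e. each row contains a unit of `O_F`), one has `k₀ ∈ T·I_n ↔ k₀ ∈ I_n`. -/
theorem statement3 {F : Type*} [Field F] (O : ValuationSubring F) (ϖ : F) (hϖ : ϖ ∈ O)
    (hirr : Irreducible (⟨ϖ, hϖ⟩ : O)) (n : ℕ) (hn : 1 ≤ n)
    (k₀ : Matrix (Fin 2) (Fin 2) F)
    (hent : ∀ i j, k₀ i j ∈ O)
    (hrow0 : UnitO O (k₀ 0 0) ∨ UnitO O (k₀ 0 1))
    (hrow1 : UnitO O (k₀ 1 0) ∨ UnitO O (k₀ 1 1))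
    (hdet : k₀.det ≠ 0) :
    (∃ t ∈ Tset F, ∃ j ∈ Iset O ϖ n, k₀ = t * j) ↔ k₀ ∈ Iset O ϖ n := by
  constructor
  · rintro ⟨t, ⟨ht01, ht10, ht00, ht11⟩, j, ⟨⟨hjent, uj, hujO, hdetj⟩, r, hrO, hj10⟩, rfl⟩
    set v := O.valuation with hv
    have e0 : ∀ l, (t * j) 0 l = t 0 0 * j 0 l := fun l => by
      simp [Matrix.mul_apply, Fin.sum_univ_two, ht01]
    have e1 : ∀ l, (t * j) 1 l = t 1 1 * j 1 l := fun l => by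
      simp [Matrix.mul_apply, Fin.sum_univ_two, ht10]
    have hjval : ∀ i l, v (j i l) ≤ 1 := fun i l => (O.valuation_le_one_iff _).2 (hjent i l)
    have hdjO : j.det ∈ O := by
      rw [Matrix.det_fin_two]
      exact sub_mem (mul_mem (hjent _ _) (hjent _ _)) (mul_mem (hjent _ _) (hjent _ _))
    have hdj1 : v j.det = 1 := (unitO_iff_val O _).1 ⟨hdjO, uj, hujO, hdetj⟩
    have hdj1' : v (j 0 0 * j 1 1 - j 0 1 * j 1 0) = 1 := by
      rw [← Matrix.det_fin_two]; exact hdj1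
    have hrow0j := row_has_unit O (hjval 0 0) (hjval 0 1) (hjval 1 0) (hjval 1 1) hdj1'
    have hdj1'' : v (j 1 0 * j 0 1 - j 1 1 * j 0 0) = 1 := by
      have : j 1 0 * j 0 1 - j 1 1 * j 0 0 = -(j 0 0 * j 1 1 - j 0 1 * j 1 0) := by ring
      rw [this, Valuation.map_neg]; exact hdj1'
    have hrow1j := row_has_unit O (hjval 1 0) (hjval 1 1) (hjval 0 0) (hjval 0 1) hdj1''
    have hrow0' : v ((t * j) 0 0) = 1 ∨ v ((t * j) 0 1) = 1 := by
      rcases hrow0 with h | h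
      · exact Or.inl ((unitO_iff_val O _).1 h)
      · exact Or.inr ((unitO_iff_val O _).1 h)
    have hrow1' : v ((t * j) 1 0) = 1 ∨ v ((t * j) 1 1) = 1 := by
      rcases hrow1 with h | h
      · exact Or.inl ((unitO_iff_val O _).1 h)
      · exact Or.inr ((unitO_iff_val O _).1 h)
    rw [e0 0, e0 1] at hrow0'
    rw [e1 0, e1 1] at hrow1'
    have hk00 : v (t 0 0 * j 0 0) ≤ 1 := by
      rw [← e0 0]; exact (O.valuation_le_one_iff _).2 (hent 0 0)
    have hk01 : v (t 0 0 * j 0 1) ≤ 1 := by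
      rw [← e0 1]; exact (O.valuation_le_one_iff _).2 (hent 0 1)
    have hk10 : v (t 1 1 * j 1 0) ≤ 1 := by
      rw [← e1 0]; exact (O.valuation_le_one_iff _).2 (hent 1 0)
    have hk11 : v (t 1 1 * j 1 1) ≤ 1 := by
      rw [← e1 1]; exact (O.valuation_le_one_iff _).2 (hent 1 1)
    have ht00v : v (t 0 0) = 1 :=
      scale_val_one O (hjval 0 0) (hjval 0 1) hrow0j hk00 hk01 hrow0'
    have ht11v : v (t 1 1) = 1 :=
      scale_val_one O (hjval 1 0) (hjval 1 1) hrow1j hk10 hk11 hrow1'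
    have hdetk : v (t * j).det = 1 := by
      rw [Matrix.det_mul, Valuation.map_mul, Matrix.det_fin_two t, ht01, ht10]
      simp only [zero_mul, mul_zero, sub_zero]
      rw [Valuation.map_mul, ht00v, ht11v, hdj1]
      simp
    refine ⟨⟨hent, (t * j).det⁻¹, ?_, ?_⟩, t 1 1 * r, ?_, ?_⟩
    · rw [← O.valuation_le_one_iff, map_inv₀, hdetk, inv_one]
    · have : (t * j).det ≠ 0 := by
        intro h; rw [h, map_zero] at hdetk; exact zero_ne_one hdetk
      exact mul_inv_cancel₀ this
    · refine mul_mem ?_ hrO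
      rw [← O.valuation_le_one_iff]; exact ht11v.le
    · rw [e1 0, hj10]; ring
  · intro h
    refine ⟨1, ?_, k₀, h, (one_mul k₀).symm⟩
    refine ⟨?_, ?_, ?_, ?_⟩ <;> simp [Matrix.one_apply]
end
end

section
/- For n ≥ 1 and k ∈ GL₂(O_F), the pair (Bk, B(0 1;1 0)k) in (B\G)² lies in the image (under Tg ↦ (Bg, Bwg)) of the I_n-orbit of the identity coset in T\G if and only if k ∈ I_n. Moreover for arbitrary k, k' ∈ K with k' ∉ Bk, the pair (Bk, Bk') lies in that image if and only if k ∈ I_n and k' ∉ I_1. -/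
open Matrix

noncomputable section

/-- The upper triangular Borel subgroup `B ⊂ GL₂(F)`, as a set of matrices. -/
def Bset (F : Type*) [Field F] : Set (Matrix (Fin 2) (Fin 2) F) :=
  {g | g 1 0 = 0 ∧ g.det ≠ 0}

/-! A coset `Bg` is determined by the bottom row of `g`: invertible matrices with the same bottom
row differ by a left factor in `B`, and if `k = bg` with `k, g ∈ K` then `b₁₁` is a unit, since the
bottom row of an element of `K` contains a unit. So `(Bk, Bk') = (Bκ, Bwκ)` pins down the rows of
`κ` up to units. For `κ ∈ I_n`, `n ≥ 1`, the diagonal of `κ` consists of units, so `k` inherits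
`ϖⁿ ∣ k₁₀` and `k'₁₀` is a unit. Conversely, the matrix with rows `(k'₁₀, k'₁₁)` and `(k₁₀, k₁₁)`
is such a `κ`: its determinant is a unit because `k'₁₀ k₁₁` is one and `k₁₀ ∈ ϖO`. -/

namespace ValuationSubring

variable {F : Type*} [Field F] (O : ValuationSubring F)

theorem valuation_eq_one_iff_exists_mul_eq_one {x : F} (hx : x ∈ O) :
    O.valuation x = 1 ↔ ∃ u ∈ O, x * u = 1 := by
  constructor
  · intro h
    have hx0 : x ≠ 0 := by rintro rfl; simp at h
    refine ⟨x⁻¹, (O.valuation_le_one_iff _).1 ?_, mul_inv_cancel₀ hx0⟩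
    rw [map_inv₀, h, inv_one]
  · rintro ⟨u, hu, hxu⟩
    refine eq_one_of_one_le_mul_left ((O.valuation_le_one_iff x).2 hx)
      ((O.valuation_le_one_iff u).2 hu) ?_
    rw [← map_mul, hxu, map_one]

theorem exists_eq_pow_mul_iff (ϖ x : F) (n : ℕ) :
    (∃ r ∈ O, x = ϖ ^ n * r) ↔ O.valuation x ≤ O.valuation ϖ ^ n := by
  rw [← map_pow, valuation_le_iff]
  constructor
  · rintro ⟨r, hr, rfl⟩
    exact ⟨⟨r, hr⟩, mul_comm _ _⟩
  · rintro ⟨r, rfl⟩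
    exact ⟨r, r.2, mul_comm _ _⟩

variable {O}

theorem valuation_lt_one_of_irreducible {ϖ : O} (hϖ : Irreducible ϖ) :
    O.valuation (ϖ : F) < 1 :=
  (O.valuation_lt_one_or_eq_one ϖ).resolve_right
    fun h => hϖ.not_isUnit ((O.valuation_eq_one_iff ϖ).2 h)

theorem valuation_le_of_irreducible {ϖ : O} (hϖ : Irreducible ϖ) {x : F}
    (hx : O.valuation x < 1) : O.valuation x ≤ O.valuation (ϖ : F) := by
  by_contra! hlt
  obtain ⟨a, ha⟩ := (O.valuation_le_iff ϖ x).1 hlt.le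
  have hxO : x ∈ O := (O.valuation_le_one_iff x).1 hx.le
  rcases hϖ.isUnit_or_isUnit (show ϖ = a * ⟨x, hxO⟩ from Subtype.ext ha.symm) with ha' | hx'
  · rw [← ha, map_mul, (O.valuation_eq_one_iff a).1 ha', one_mul] at hlt
    exact hlt.false
  · exact hx.ne ((O.valuation_eq_one_iff _).1 hx')

end ValuationSubring

section Matrices

variable {F : Type*} [Field F] {O : ValuationSubring F} {g h k b : Matrix (Fin 2) (Fin 2) F}

theorem det_mem_of_forall_mem (hg : ∀ i j, g i j ∈ O) : g.det ∈ O := by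
  rw [det_fin_two]
  exact sub_mem (mul_mem (hg 0 0) (hg 1 1)) (mul_mem (hg 0 1) (hg 1 0))

theorem mem_Kset_iff :
    g ∈ Kset O ↔ (∀ i j, g i j ∈ O) ∧ O.valuation g.det = 1 :=
  and_congr_right fun hg =>
    (O.valuation_eq_one_iff_exists_mul_eq_one (det_mem_of_forall_mem hg)).symm

theorem det_ne_zero_of_mem_Kset (hg : g ∈ Kset O) : g.det ≠ 0 := by
  intro h0
  simpa [h0] using (mem_Kset_iff.1 hg).2

theorem mul_mem_Kset (hg : g ∈ Kset O) (hh : h ∈ Kset O) : g * h ∈ Kset O := by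
  rw [mem_Kset_iff] at hg hh ⊢
  refine ⟨fun i j => ?_, by rw [det_mul, map_mul, hg.2, hh.2, one_mul]⟩
  rw [mul_apply]
  exact sum_mem fun l _ => mul_mem (hg.1 i l) (hh.1 l j)

theorem swap_mem_Kset : !![(0 : F), 1; 1, 0] ∈ Kset O := by
  refine ⟨fun i j => ?_, -1, neg_mem O.one_mem, by simp⟩
  fin_cases i <;> fin_cases j <;> simp [O.zero_mem, O.one_mem]

theorem swap_mul (g : Matrix (Fin 2) (Fin 2) F) :
    !![(0 : F), 1; 1, 0] * g = !![g 1 0, g 1 1; g 0 0, g 0 1] := by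
  ext i j; fin_cases i <;> fin_cases j <;> simp [mul_apply, Fin.sum_univ_two]

theorem exists_valuation_row_one_eq_one (hg : g ∈ Kset O) : ∃ j, O.valuation (g 1 j) = 1 := by
  rw [mem_Kset_iff] at hg
  by_contra! hrow
  have hle : ∀ i j, O.valuation (g i j) ≤ 1 := fun i j => (O.valuation_le_one_iff _).2 (hg.1 i j)
  have hlt : ∀ i j, O.valuation (g 0 i * g 1 j) < 1 := fun i j => by
    rw [map_mul]
    exact (mul_le_of_le_one_left' (hle 0 i)).trans_lt ((hle 1 j).lt_of_ne (hrow j))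
  have hdet : O.valuation g.det < 1 := by
    rw [det_fin_two]
    exact Valuation.map_sub_lt _ (hlt 0 1) (hlt 1 0)
  exact hdet.ne hg.2

theorem mul_apply_one_of_mem_Bset (hb : b ∈ Bset F) (j : Fin 2) :
    (b * g) 1 j = b 1 1 * g 1 j := by
  simp [mul_apply, Fin.sum_univ_two, hb.1]

theorem valuation_one_one_eq_one_of_eq_mul (hk : k ∈ Kset O) (hg : g ∈ Kset O) (hb : b ∈ Bset F)
    (hkbg : k = b * g) : O.valuation (b 1 1) = 1 := by
  have hrow (j) : O.valuation (k 1 j) = O.valuation (b 1 1) * O.valuation (g 1 j) := by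
    rw [hkbg, mul_apply_one_of_mem_Bset hb, map_mul]
  obtain ⟨j, hj⟩ := exists_valuation_row_one_eq_one hg
  obtain ⟨j', hj'⟩ := exists_valuation_row_one_eq_one hk
  refine le_antisymm ?_ ?_
  · calc O.valuation (b 1 1) = O.valuation (k 1 j) := by rw [hrow, hj, mul_one]
      _ ≤ 1 := (O.valuation_le_one_iff _).2 (hk.1 1 j)
  · rw [← hj', hrow]
    exact mul_le_of_le_one_right' ((O.valuation_le_one_iff _).2 (hg.1 1 j'))

theorem valuation_diag_eq_one_of_valuation_lt_one (hg : g ∈ Kset O)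
    (h10 : O.valuation (g 1 0) < 1) :
    O.valuation (g 0 0) = 1 ∧ O.valuation (g 1 1) = 1 := by
  rw [mem_Kset_iff, det_fin_two] at hg
  have hle : ∀ i j, O.valuation (g i j) ≤ 1 := fun i j => (O.valuation_le_one_iff _).2 (hg.1 i j)
  have hoff : O.valuation (g 0 1 * g 1 0) < O.valuation (g 0 0 * g 1 1 - g 0 1 * g 1 0) := by
    rw [hg.2, map_mul]
    exact (mul_le_of_le_one_left' (hle 0 1)).trans_lt h10
  have hdiag : 1 ≤ O.valuation (g 0 0) * O.valuation (g 1 1) := by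
    rw [← map_mul, ← sub_add_cancel (g 0 0 * g 1 1) (g 0 1 * g 1 0),
      Valuation.map_add_eq_of_lt_left _ hoff, hg.2]
  exact ⟨eq_one_of_one_le_mul_left (hle 0 0) (hle 1 1) hdiag,
    eq_one_of_one_le_mul_right (hle 0 0) (hle 1 1) hdiag⟩

theorem exists_mem_Bset_mul_of_row_one_eq (hg : g.det ≠ 0) (hh : h.det ≠ 0)
    (hrow : g 1 = h 1) : ∃ b ∈ Bset F, g = b * h := by
  have hunit : IsUnit h.det := isUnit_iff_ne_zero.2 hh
  refine ⟨g * h⁻¹, ⟨?_, ?_⟩, (nonsing_inv_mul_cancel_right h g hunit).symm⟩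
  · have : (g * h⁻¹) 1 0 = (h * h⁻¹) 1 0 := by simp only [mul_apply, hrow]
    rw [this, mul_nonsing_inv h hunit, one_apply_ne (by decide)]
  · simp [det_nonsing_inv, hg, hh]

end Matrices

section OrbitImage

variable {F : Type*} [Field F] {O : ValuationSubring F} {ϖ : F} {n : ℕ}
  {g k k' : Matrix (Fin 2) (Fin 2) F}

theorem mem_Iset_iff :
    g ∈ Iset O ϖ n ↔ g ∈ Kset O ∧ O.valuation (g 1 0) ≤ O.valuation ϖ ^ n :=
  and_congr_right fun _ => O.exists_eq_pow_mul_iff ϖ (g 1 0) n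

theorem valuation_lt_one_of_mem_Iset (hϖ : O.valuation ϖ < 1) (hn : n ≠ 0)
    (hg : g ∈ Iset O ϖ n) : O.valuation (g 1 0) < 1 :=
  (mem_Iset_iff.1 hg).2.trans_lt (pow_lt_one₀ zero_le hϖ hn)

/-- `(Bk, Bk') = (Bκ, Bwκ)` for some `κ ∈ I_n`: the pair lies in the image of the `I_n`-orbit of
the identity coset under `Tg ↦ (Bg, Bwg)`. -/
def InOrbitImage (O : ValuationSubring F) (ϖ : F) (n : ℕ) (k k' : Matrix (Fin 2) (Fin 2) F) :
    Prop :=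
  ∃ κ ∈ Iset O ϖ n, (∃ b ∈ Bset F, k = b * κ) ∧ ∃ b ∈ Bset F, k' = b * (!![0, 1; 1, 0] * κ)

theorem InOrbitImage.mem_Iset (h : InOrbitImage O ϖ n k k') (hk : k ∈ Kset O) :
    k ∈ Iset O ϖ n := by
  obtain ⟨κ, hκ, ⟨b, hb, hkbκ⟩, -⟩ := h
  rw [mem_Iset_iff] at hκ ⊢
  refine ⟨hk, ?_⟩
  rw [hkbκ, mul_apply_one_of_mem_Bset hb, map_mul,
    valuation_one_one_eq_one_of_eq_mul hk hκ.1 hb hkbκ, one_mul]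
  exact hκ.2

theorem InOrbitImage.notMem_Iset_one (h : InOrbitImage O ϖ n k k') (hϖ : O.valuation ϖ < 1)
    (hn : n ≠ 0) (hk' : k' ∈ Kset O) : k' ∉ Iset O ϖ 1 := by
  obtain ⟨κ, hκ, -, b, hb, hk'bκ⟩ := h
  have hk'10 : O.valuation (k' 1 0) = 1 := by
    rw [hk'bκ, mul_apply_one_of_mem_Bset hb, map_mul,
      valuation_one_one_eq_one_of_eq_mul hk' (mul_mem_Kset swap_mem_Kset hκ.1) hb hk'bκ, one_mul,
      swap_mul]
    exact (valuation_diag_eq_one_of_valuation_lt_one hκ.1 (valuation_lt_one_of_mem_Iset hϖ hn hκ)).1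
  exact fun hk'I => (valuation_lt_one_of_mem_Iset hϖ one_ne_zero hk'I).ne hk'10

theorem inOrbitImage_of_mem_Iset_of_notMem_Iset_one {ϖ : O} (hϖ : Irreducible ϖ) (hn : n ≠ 0)
    (hk : k ∈ Iset O ϖ n) (hk' : k' ∈ Kset O) (hk'I : k' ∉ Iset O ϖ 1) :
    InOrbitImage O ϖ n k k' := by
  have hk'10 : O.valuation (k' 1 0) = 1 := by
    by_contra h
    refine hk'I (mem_Iset_iff.2 ⟨hk', ?_⟩)
    rw [pow_one]
    exact O.valuation_le_of_irreducible hϖ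
      (((O.valuation_le_one_iff _).2 (hk'.1 1 0)).lt_of_ne h)
  have hk10 := valuation_lt_one_of_mem_Iset (O.valuation_lt_one_of_irreducible hϖ) hn hk
  have hk11 := (valuation_diag_eq_one_of_valuation_lt_one hk.1 hk10).2
  set κ := !![k' 1 0, k' 1 1; k 1 0, k 1 1]
  have hκ : κ ∈ Kset O := by
    refine mem_Kset_iff.2 ⟨fun i j => ?_, ?_⟩
    · fin_cases i <;> fin_cases j
      exacts [hk'.1 1 0, hk'.1 1 1, hk.1.1 1 0, hk.1.1 1 1]
    · rw [det_fin_two_of, Valuation.map_sub_eq_of_lt_left, map_mul, hk'10, hk11, one_mul]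
      rw [map_mul, map_mul, hk'10, hk11, one_mul]
      exact (mul_le_of_le_one_left' ((O.valuation_le_one_iff _).2 (hk'.1 1 1))).trans_lt hk10
  refine ⟨κ, ⟨hκ, hk.2⟩,
    exists_mem_Bset_mul_of_row_one_eq (det_ne_zero_of_mem_Kset hk.1)
      (det_ne_zero_of_mem_Kset hκ) ?_,
    exists_mem_Bset_mul_of_row_one_eq (det_ne_zero_of_mem_Kset hk')
      (det_ne_zero_of_mem_Kset (mul_mem_Kset swap_mem_Kset hκ)) ?_⟩
  · ext j; fin_cases j <;> rfl
  · ext j; fin_cases j <;> simp [κ]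

end OrbitImage

/-- under the identification `Tg ↦ (Bg, Bwg)` of `T\G` with the complement
of the diagonal in `B\G × B\G`, for `k ∈ K` the pair `(Bk, Bwk)` lies in the image of the
`I_n`-orbit of the identity coset iff `k ∈ I_n`; and for `k, k' ∈ K` with `k' ∉ Bk`, the
pair `(Bk, Bk')` lies in that image iff `k ∈ I_n` and `k' ∉ I_1`. -/
theorem statement17 {F : Type*} [Field F] (O : ValuationSubring F) (ϖ : F) (hϖ : ϖ ∈ O)
    (hirr : Irreducible (⟨ϖ, hϖ⟩ : O)) (n : ℕ) (hn : 1 ≤ n) :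
    (∀ k ∈ Kset O,
      ((∃ κ ∈ Iset O ϖ n, (∃ b ∈ Bset F, k = b * κ) ∧
          (∃ b ∈ Bset F, !![0, 1; 1, 0] * k = b * (!![0, 1; 1, 0] * κ)))
        ↔ k ∈ Iset O ϖ n)) ∧
    (∀ k ∈ Kset O, ∀ k' ∈ Kset O, (¬ ∃ b ∈ Bset F, k' = b * k) →
      ((∃ κ ∈ Iset O ϖ n, (∃ b ∈ Bset F, k = b * κ) ∧
          (∃ b ∈ Bset F, k' = b * (!![0, 1; 1, 0] * κ)))
        ↔ (k ∈ Iset O ϖ n ∧ k' ∉ Iset O ϖ 1))) := by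
  have hϖ1 : O.valuation ϖ < 1 := O.valuation_lt_one_of_irreducible hirr
  have hn0 : n ≠ 0 := Nat.one_le_iff_ne_zero.1 hn
  have hB1 : (1 : Matrix (Fin 2) (Fin 2) F) ∈ Bset F := ⟨by simp, by simp⟩
  refine ⟨fun k hk => ⟨fun h => InOrbitImage.mem_Iset h hk, fun hkI => ?_⟩,
    fun k hk k' hk' _ => ⟨fun h => ?_, fun ⟨hkI, hk'I⟩ => ?_⟩⟩
  · exact ⟨k, hkI, ⟨1, hB1, (one_mul k).symm⟩, 1, hB1, (one_mul _).symm⟩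
  · exact ⟨InOrbitImage.mem_Iset h hk, InOrbitImage.notMem_Iset_one h hϖ1 hn0 hk'⟩
  · exact inOrbitImage_of_mem_Iset_of_notMem_Iset_one hirr hn0 hkI hk' hk'I
end
end
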